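/- arXiv:2105.14260 — 4 statements merged into one kernel-verified Lean document; each statement's English description precedes it below -/
import Mathlib

section
/- For random variables X and Y taking values in finite sets, if Y = (Y_1, ..., Y_n) is a vector of random variables such that Y_1, ..., Y_n are mutually independent conditional on X, then the mutual information satisfies I(X;Y) ≤ Σ_{i=1}^n I(X;Y_i). -/
open Finset

open Classical in
/-- Probability of an event under a probability mass function `p` on a finite sample space. -/
noncomputable def pr {Ω : Type*} [Fintype Ω] (p : Ω → ℝ) (s : Ω → Prop) : ℝ :=
  ∑ ω : Ω, if s ω then p ω else 0

/-- Mutual information `I(X;Z)` of discrete random variables on a finite probability space,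
with natural logarithm. -/
noncomputable def mutualInfo {Ω A C : Type*} [Fintype Ω] [Fintype A] [Fintype C]
    (p : Ω → ℝ) (X : Ω → A) (Z : Ω → C) : ℝ :=
  ∑ x : A, ∑ z : C,
    pr p (fun ω => X ω = x ∧ Z ω = z) *
      Real.log (pr p (fun ω => X ω = x ∧ Z ω = z) /
        (pr p (fun ω => X ω = x) * pr p (fun ω => Z ω = z)))

/-!
Write `a = P(X = x)`, `b = P(Y = y)`, `q = P(X = x, Y = y)` and `bᵢ, qᵢ` for the marginals of
`Yᵢ`. Conditional independence says `a ^ (n - 1) q = ∏ qᵢ`, so at every outcome the pointwise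
mutual information of `(X, Y)` exceeds the sum of those of the `(X, Yᵢ)` by exactly
`log (∏ bᵢ / b)`. Averaging, `I(X;Y) - ∑ I(X;Yᵢ) = ∑_y b log (∏ bᵢ / b)`, which is `≤ 0` by
Gibbs' inequality (`log t ≤ t - 1`) since `∑_y ∏ bᵢ = 1 = ∑_y b`.
-/

open Real

lemma mul_log_div_le_sub {u v : ℝ} (hu : 0 ≤ u) (hv : 0 ≤ v) (huv : 0 < u → 0 < v) :
    u * log (v / u) ≤ v - u := by
  rcases hu.eq_or_lt with rfl | hu
  · simpa using hv
  calc u * log (v / u) ≤ u * (v / u - 1) :=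
        mul_le_mul_of_nonneg_left (log_le_sub_one_of_pos (div_pos (huv hu) hu)) hu.le
    _ = v - u := by field_simp

lemma sum_mul_log_div_le_sub {ι : Type*} (s : Finset ι) {u v : ι → ℝ} (hu : ∀ i, 0 ≤ u i)
    (hv : ∀ i, 0 ≤ v i) (huv : ∀ i, 0 < u i → 0 < v i) :
    ∑ i ∈ s, u i * log (v i / u i) ≤ ∑ i ∈ s, v i - ∑ i ∈ s, u i := by
  rw [← sum_sub_distrib]
  exact sum_le_sum fun i _ => mul_log_div_le_sub (hu i) (hv i) (huv i)

lemma log_div_sub_sum_log_div {ι : Type*} [Fintype ι] [Nonempty ι] {a b q : ℝ} {bi qi : ι → ℝ}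
    (ha : 0 < a) (hb : 0 < b) (hq : 0 < q) (hbi : ∀ i, 0 < bi i) (hqi : ∀ i, 0 < qi i)
    (hind : a ^ (Fintype.card ι - 1) * q = ∏ i, qi i) :
    log (q / (a * b)) - ∑ i, log (qi i / (a * bi i)) = log ((∏ i, bi i) / b) := by
  have hlog_qi : ∑ i, log (qi i) = (Fintype.card ι - 1 : ℕ) * log a + log q := by
    rw [← log_prod fun i _ => (hqi i).ne', ← hind, log_mul (by positivity) hq.ne', log_pow]
  have hcard : ((Fintype.card ι - 1 : ℕ) : ℝ) = Fintype.card ι - 1 := by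
    rw [Nat.cast_sub Fintype.card_pos, Nat.cast_one]
  have hterm : ∀ i, log (qi i / (a * bi i)) = log (qi i) - log a - log (bi i) := fun i => by
    rw [log_div (hqi i).ne' (mul_pos ha (hbi i)).ne', log_mul ha.ne' (hbi i).ne', sub_sub]
  rw [log_div hq.ne' (mul_pos ha hb).ne', log_mul ha.ne' hb.ne',
    log_div (prod_pos fun i _ => hbi i).ne' hb.ne', log_prod fun i _ => (hbi i).ne']
  simp only [hterm, sum_sub_distrib, hlog_qi, hcard, sum_const, card_univ, nsmul_eq_mul]
  ring

noncomputable def pointwiseMutualInfo {Ω A C : Type*} [Fintype Ω] (p : Ω → ℝ) (X : Ω → A)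
    (Z : Ω → C) (ω : Ω) : ℝ :=
  log (pr p (fun ω' => X ω' = X ω ∧ Z ω' = Z ω) /
    (pr p (fun ω' => X ω' = X ω) * pr p (fun ω' => Z ω' = Z ω)))

section Information

variable {Ω A B ι : Type*} [Fintype Ω] {p : Ω → ℝ}

lemma pr_congr {s t : Ω → Prop} (h : ∀ ω, s ω ↔ t ω) : pr p s = pr p t := by
  rw [show s = t from funext fun ω => propext (h ω)]

lemma pr_nonneg (hp0 : ∀ ω, 0 ≤ p ω) (s : Ω → Prop) : 0 ≤ pr p s := by
  classical
  exact sum_nonneg fun ω _ => by split_ifs <;> simp [hp0 ω]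

lemma pr_mono (hp0 : ∀ ω, 0 ≤ p ω) {s t : Ω → Prop} (h : ∀ ω, s ω → t ω) :
    pr p s ≤ pr p t := by
  classical
  exact sum_le_sum fun ω _ => by split_ifs <;> simp_all

lemma pr_pos (hp0 : ∀ ω, 0 ≤ p ω) {s : Ω → Prop} {ω : Ω} (hω : 0 < p ω) (hs : s ω) :
    0 < pr p s := by
  classical
  refine hω.trans_le ?_
  unfold pr
  convert single_le_sum (f := fun ω => if s ω then p ω else 0)
    (fun ω _ => by split_ifs <;> simp [hp0 ω]) (mem_univ ω)
  simp [hs]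

lemma sum_pr_mul [Fintype B] (Z : Ω → B) (F : B → ℝ) :
    ∑ z, pr p (fun ω => Z ω = z) * F z = ∑ ω, p ω * F (Z ω) := by
  unfold pr
  simp only [sum_mul, ite_mul, zero_mul]
  rw [sum_comm]
  refine sum_congr rfl fun ω _ => ?_
  classical
  convert Fintype.sum_ite_eq (Z ω) (fun z => p ω * F z)

lemma sum_sum_pr_mul [Fintype A] [Fintype B] (X : Ω → A) (Z : Ω → B) (F : A → B → ℝ) :
    ∑ x, ∑ z, pr p (fun ω => X ω = x ∧ Z ω = z) * F x z = ∑ ω, p ω * F (X ω) (Z ω) := by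
  rw [← sum_pr_mul (fun ω => (X ω, Z ω)) (fun xz => F xz.1 xz.2), Fintype.sum_prod_type]
  simp only [Prod.mk.injEq]

lemma mutualInfo_eq_sum_pointwiseMutualInfo [Fintype A] [Fintype B] (X : Ω → A) (Z : Ω → B) :
    mutualInfo p X Z = ∑ ω, p ω * pointwiseMutualInfo p X Z ω :=
  sum_sum_pr_mul X Z _

lemma sum_pr_eq_one [Fintype B] (hp1 : ∑ ω, p ω = 1) (Z : Ω → B) :
    ∑ z, pr p (fun ω => Z ω = z) = 1 := by
  simpa [hp1] using sum_pr_mul (p := p) Z 1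

lemma mutualInfo_eq_zero_of_subsingleton [Fintype A] [Fintype B] [Subsingleton B]
    (hp1 : ∑ ω, p ω = 1) (X : Ω → A) (Z : Ω → B) : mutualInfo p X Z = 0 := by
  refine sum_eq_zero fun x _ => sum_eq_zero fun z _ => ?_
  have hZ : pr p (fun ω => Z ω = z) = 1 := by
    rw [← sum_pr_eq_one hp1 Z, Fintype.sum_subsingleton _ z]
  rw [pr_congr fun ω => and_iff_left (Subsingleton.elim (Z ω) z), hZ, mul_one]
  rcases eq_or_ne (pr p fun ω => X ω = x) 0 with h | h <;> simp [h]

lemma sum_pr_mul_log_prod_div_nonpos [Fintype B] [Fintype ι] [DecidableEq ι]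
    (hp0 : ∀ ω, 0 ≤ p ω) (hp1 : ∑ ω, p ω = 1) (Y : ι → Ω → B) :
    ∑ y : ι → B, pr p (fun ω => (fun i => Y i ω) = y) *
      log ((∏ i, pr p (fun ω => Y i ω = y i)) / pr p (fun ω => (fun i => Y i ω) = y)) ≤ 0 := by
  have hprod : ∑ y : ι → B, ∏ i, pr p (fun ω => Y i ω = y i) = 1 := by
    rw [← Fintype.prod_sum (fun i c => pr p (fun ω => Y i ω = c))]
    exact prod_eq_one fun i _ => sum_pr_eq_one hp1 (Y i)
  calc _ ≤ ∑ y : ι → B, ∏ i, pr p (fun ω => Y i ω = y i) -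
          ∑ y : ι → B, pr p (fun ω => (fun i => Y i ω) = y) :=
        sum_mul_log_div_le_sub _ (fun _ => pr_nonneg hp0 _)
          (fun _ => prod_nonneg fun _ _ => pr_nonneg hp0 _)
          (fun _ hy => prod_pos fun i _ => hy.trans_le (pr_mono hp0 fun ω h => congrFun h i))
    _ = 0 := by rw [hprod, sum_pr_eq_one hp1, sub_self]

lemma pointwiseMutualInfo_sub_sum_of_condIndep [Fintype ι] [Nonempty ι] (hp0 : ∀ ω, 0 ≤ p ω)
    (X : Ω → A) (Y : ι → Ω → B)
    (hindep : ∀ (x : A) (y : ι → B),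
      pr p (fun ω => X ω = x) ^ (Fintype.card ι - 1) *
          pr p (fun ω => X ω = x ∧ ∀ i, Y i ω = y i) =
        ∏ i, pr p (fun ω => X ω = x ∧ Y i ω = y i))
    {ω : Ω} (hω : 0 < p ω) :
    pointwiseMutualInfo p X (fun ω i => Y i ω) ω - ∑ i, pointwiseMutualInfo p X (Y i) ω =
      log ((∏ i, pr p (fun ω' => Y i ω' = Y i ω)) /
        pr p (fun ω' => (fun i => Y i ω') = fun i => Y i ω)) := by
  have hpos : ∀ s : Ω → Prop, s ω → 0 < pr p s := fun _ => pr_pos hp0 hω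
  refine log_div_sub_sum_log_div (hpos _ rfl) (hpos _ rfl) (hpos _ ⟨rfl, rfl⟩)
    (fun _ => hpos _ rfl) (fun _ => hpos _ ⟨rfl, rfl⟩) ?_
  rw [pr_congr fun ω' => and_congr_right' funext_iff]
  exact hindep _ _

theorem mutualInfo_le_sum_mutualInfo_of_condIndep [Fintype A] [Fintype B] [Fintype ι]
    [DecidableEq ι] (hp0 : ∀ ω, 0 ≤ p ω) (hp1 : ∑ ω, p ω = 1)
    (X : Ω → A) (Y : ι → Ω → B)
    (hindep : ∀ (x : A) (y : ι → B),
      pr p (fun ω => X ω = x) ^ (Fintype.card ι - 1) *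
          pr p (fun ω => X ω = x ∧ ∀ i, Y i ω = y i) =
        ∏ i, pr p (fun ω => X ω = x ∧ Y i ω = y i)) :
    mutualInfo p X (fun ω i => Y i ω) ≤ ∑ i, mutualInfo p X (Y i) := by
  cases isEmpty_or_nonempty ι
  · simp [mutualInfo_eq_zero_of_subsingleton hp1]
  set F : (ι → B) → ℝ := fun y =>
    (∏ i, pr p (fun ω => Y i ω = y i)) / pr p (fun ω => (fun i => Y i ω) = y)
  rw [← sub_nonpos]
  calc mutualInfo p X (fun ω i => Y i ω) - ∑ i, mutualInfo p X (Y i)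
      = ∑ ω, p ω * (pointwiseMutualInfo p X (fun ω i => Y i ω) ω -
          ∑ i, pointwiseMutualInfo p X (Y i) ω) := by
        simp only [mutualInfo_eq_sum_pointwiseMutualInfo, mul_sub, mul_sum, sum_sub_distrib]
        rw [sum_comm (γ := ι)]
    _ = ∑ ω, p ω * log (F fun i => Y i ω) := sum_congr rfl fun ω _ => by
        rcases (hp0 ω).eq_or_lt with h | h
        · simp [← h]
        · rw [pointwiseMutualInfo_sub_sum_of_condIndep hp0 X Y hindep h]
    _ = ∑ y, pr p (fun ω => (fun i => Y i ω) = y) * log (F y) :=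
        (sum_pr_mul (fun ω i => Y i ω) (fun y => log (F y))).symm
    _ ≤ 0 := sum_pr_mul_log_prod_div_nonpos hp0 hp1 Y

end Information

/-- Tensorization of mutual information: if `Y = (Y_1, ..., Y_n)` are mutually independent
conditional on `X`, then `I(X;Y) ≤ ∑ i, I(X;Y_i)`. -/
theorem stmt0 {Ω A B : Type*} [Fintype Ω] [Fintype A] [Fintype B] (n : ℕ)
    (p : Ω → ℝ) (hp0 : ∀ ω, 0 ≤ p ω) (hp1 : ∑ ω : Ω, p ω = 1)
    (X : Ω → A) (Y : Fin n → Ω → B)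
    (hindep : ∀ (x : A) (y : Fin n → B),
      pr p (fun ω => X ω = x) ^ (n - 1) *
          pr p (fun ω => X ω = x ∧ ∀ i, Y i ω = y i) =
        ∏ i : Fin n, pr p (fun ω => X ω = x ∧ Y i ω = y i)) :
    mutualInfo p X (fun ω i => Y i ω) ≤ ∑ i : Fin n, mutualInfo p X (Y i) :=
  mutualInfo_le_sum_mutualInfo_of_condIndep hp0 hp1 X Y (by simpa only [Fintype.card_fin])
end

section
/- Let G = (V,E) be a directed graph and U the set of vertices without self-loops. If S ⊆ U is a vertex packing set (i.e., for every vertex i ∈ V, |N_out(i) ∩ S| ≤ 1), then there exists a subset H ⊆ S such that H is an independent set, every vertex v ∈ V has |N_out(v) ∩ H| ≤ 1, and |H| ≥ |S|/3. -/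
/-!
Restricted to `S`, every vertex has out-degree at most one, so the in- and out-degrees in `S`
sum to at most `2 |S|` and some vertex `v ∈ S` has at most two neighbours in `S`. Put `v` into
`H`, discard `v` together with its neighbours (at most three vertices) and recurse. The result
is independent and loses at most three vertices of `S` per vertex of `H`; the `1`-packing
property is inherited from `S` because `H ⊆ S`.
-/

open Finset

section Digraph

variable {V : Type*} [DecidableEq V] (E : V → V → Prop) [DecidableRel E]

def closedNbhdIn (S : Finset V) (v : V) : Finset V :=
  S.filter fun u => u = v ∨ E v u ∨ E u v

lemma card_closedNbhdIn_le (S : Finset V) (v : V) :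
    #(closedNbhdIn E S v) ≤ 1 + #(S.filter (E v ·)) + #(S.filter (E · v)) := by
  have hself : #(S.filter (· = v)) ≤ 1 :=
    card_le_one.mpr fun a ha b hb => (mem_filter.mp ha).2.trans (mem_filter.mp hb).2.symm
  calc #(closedNbhdIn E S v)
      = #(S.filter (· = v) ∪ (S.filter (E v ·) ∪ S.filter (E · v))) := by
        rw [closedNbhdIn, filter_or, filter_or]
    _ ≤ #(S.filter (· = v)) + (#(S.filter (E v ·)) + #(S.filter (E · v))) :=
        (card_union_le _ _).trans (Nat.add_le_add_left (card_union_le _ _) _)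
    _ ≤ 1 + #(S.filter (E v ·)) + #(S.filter (E · v)) := by omega

lemma exists_card_closedNbhdIn_le_three {S : Finset V} (hS : S.Nonempty)
    (hpack : ∀ i ∈ S, #(S.filter (E i ·)) ≤ 1) :
    ∃ v ∈ S, #(closedNbhdIn E S v) ≤ 3 := by
  have hin_out : ∑ v ∈ S, #(S.filter (E · v)) = ∑ v ∈ S, #(S.filter (E v ·)) :=
    (sum_card_bipartiteAbove_eq_sum_card_bipartiteBelow E).symm
  have hout : ∑ v ∈ S, #(S.filter (E v ·)) ≤ #S :=
    (sum_le_sum hpack).trans_eq (card_eq_sum_ones S).symm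
  obtain ⟨v, hv, hdeg⟩ : ∃ v ∈ S, #(S.filter (E v ·)) + #(S.filter (E · v)) ≤ 2 := by
    refine exists_le_of_sum_le hS ?_
    rw [sum_add_distrib, hin_out, sum_const, smul_eq_mul]
    omega
  exact ⟨v, hv, (card_closedNbhdIn_le E S v).trans (by omega)⟩

theorem exists_independent_subset_card_le_three_mul (S : Finset V) (hU : ∀ j ∈ S, ¬ E j j)
    (hpack : ∀ i ∈ S, #(S.filter (E i ·)) ≤ 1) :
    ∃ H ⊆ S, (∀ u ∈ H, ∀ w ∈ H, ¬ E u w) ∧ #S ≤ 3 * #H := by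
  induction S using Finset.strongInduction with
  | H S ih =>
  rcases S.eq_empty_or_nonempty with rfl | hS
  · exact ⟨∅, empty_subset _, by simp, by simp⟩
  obtain ⟨v, hv, hN⟩ := exists_card_closedNbhdIn_le_three E hS hpack
  have hvN : v ∈ closedNbhdIn E S v := mem_filter.mpr ⟨hv, Or.inl rfl⟩
  have hRS : S \ closedNbhdIn E S v ⊂ S := sdiff_ssubset (filter_subset _ _) ⟨v, hvN⟩
  obtain ⟨H, hHR, hHind, hHcard⟩ := ih _ hRS (fun j hj => hU j (hRS.subset hj))
    fun i hi => (card_le_card (filter_subset_filter _ hRS.subset)).trans (hpack i (hRS.subset hi))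
  have hfar : ∀ u ∈ H, u ≠ v ∧ ¬ E v u ∧ ¬ E u v := fun u hu => by
    have := hHR hu
    simp only [closedNbhdIn, mem_sdiff, mem_filter, not_and, not_or] at this
    exact this.2 this.1
  refine ⟨insert v H, insert_subset hv (hHR.trans hRS.subset), ?_, ?_⟩
  · simp only [mem_insert, forall_eq_or_imp]
    exact ⟨⟨hU v hv, fun w hw => (hfar w hw).2.1⟩,
      fun u hu => ⟨(hfar u hu).2.2, hHind u hu⟩⟩
  · have hsplit := card_sdiff_add_card_eq_card (s := closedNbhdIn E S v) (filter_subset _ _)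
    rw [card_insert_of_notMem fun hvH => (hfar v hvH).1 rfl]
    omega

end Digraph

theorem stmt1_general {V : Type*} [DecidableEq V] (E : V → V → Prop) [DecidableRel E]
    (S : Finset V)
    (hU : ∀ j ∈ S, ¬ E j j)
    (hpack : ∀ i : V, (S.filter (fun u => E i u)).card ≤ 1) :
    ∃ H ⊆ S, (∀ u ∈ H, ∀ v ∈ H, ¬ E u v) ∧
      (∀ i : V, (H.filter (fun u => E i u)).card ≤ 1) ∧
      S.card ≤ 3 * H.card := by
  obtain ⟨H, hHS, hHind, hHcard⟩ :=
    exists_independent_subset_card_le_three_mul E S hU fun i _ => hpack i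
  exact ⟨H, hHS, hHind,
    fun i => (card_le_card (filter_subset_filter _ hHS)).trans (hpack i), hHcard⟩

/-- From any vertex packing set `S` (a set of vertices without self-loops such that every vertex
has at most one out-neighbor in `S`) one can extract a `1`-packing independent set `H ⊆ S`
with `|H| ≥ |S|/3`. -/
theorem stmt1 {V : Type*} [Fintype V] [DecidableEq V] (E : V → V → Prop) [DecidableRel E]
    (S : Finset V)
    (hU : ∀ j ∈ S, ¬ E j j)
    (hpack : ∀ i : V, (S.filter (fun u => E i u)).card ≤ 1) :
    ∃ H ⊆ S, (∀ u ∈ H, ∀ v ∈ H, ¬ E u v) ∧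
      (∀ i : V, (H.filter (fun u => E i u)).card ≤ 1) ∧
      S.card ≤ 3 * H.card :=
  stmt1_general E S hU hpack
end

section
/- Every directed tree (a directed graph whose underlying undirected graph is a tree, with each tree edge oriented in one direction) is 1-degenerate: one can iteratively apply the two reduction operations to reach the empty graph. -/
/-! A forest is 1-degenerate in the undirected sense: every nonempty vertex set `S` contains a
vertex with at most one neighbour in `S`, e.g. one farthest from a fixed vertex of `S`. Such a
vertex has in- and out-degree at most one, so operation (a) removes its in-edge or, if it has none,
operation (b) removes the vertex itself. Both keep the undirected property, so induction on the
size of the digraph reduces it to the empty graph. -/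

open Finset

/-- `OneDeg V E` holds when the directed graph with vertex set `V` and directed edge set `E`
can be reduced to the empty graph by iteratively applying, in some order:
(a) pick a vertex with in-degree exactly one and remove its unique in-edge;
(b) pick a vertex with in-degree zero and out-degree at most one, and remove the vertex
together with its out-edge (if any). This is the `1`-degeneracy of directed graphs. -/
inductive OneDeg {α : Type*} [DecidableEq α] : Finset α → Finset (α × α) → Prop
  | empty : OneDeg ∅ ∅
  | removeInEdge (V : Finset α) (E : Finset (α × α)) (u v : α)
      (hv : v ∈ V) (he : (u, v) ∈ E)
      (hdeg : (E.filter (fun e => e.2 = v)).card = 1)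
      (ih : OneDeg V (E.erase (u, v))) : OneDeg V E
  | removeVertex (V : Finset α) (E : Finset (α × α)) (v : α)
      (hv : v ∈ V)
      (hin : E.filter (fun e => e.2 = v) = ∅)
      (hout : (E.filter (fun e => e.1 = v)).card ≤ 1)
      (ih : OneDeg (V.erase v) (E.filter (fun e => e.1 ≠ v))) : OneDeg V E

section

variable {α : Type*} [DecidableEq α]

/-- Undirected 1-degeneracy of the multigraph underlying `E`, in which a pair of antiparallel
edges counts twice. -/
def UndirectedOneDeg (V : Finset α) (E : Finset (α × α)) : Prop :=
  ∀ S ⊆ V, S.Nonempty → ∃ v ∈ S, #{e ∈ E | e.1 ∈ S ∧ e.2 ∈ S ∧ (e.1 = v ∨ e.2 = v)} ≤ 1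

namespace UndirectedOneDeg

variable {V V' : Finset α} {E E' : Finset (α × α)}

theorem mono (h : UndirectedOneDeg V E) (hV : V' ⊆ V) (hE : E' ⊆ E) : UndirectedOneDeg V' E' :=
  fun S hS hS₀ =>
    let ⟨v, hv, hdeg⟩ := h S (hS.trans hV) hS₀
    ⟨v, hv, (card_le_card (filter_subset_filter _ hE)).trans hdeg⟩

theorem exists_inDeg_le_one_outDeg_le_one (h : UndirectedOneDeg V E)
    (hE : ∀ e ∈ E, e.1 ∈ V ∧ e.2 ∈ V) (hV : V.Nonempty) :
    ∃ v ∈ V, #{e ∈ E | e.2 = v} ≤ 1 ∧ #{e ∈ E | e.1 = v} ≤ 1 := by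
  obtain ⟨v, hv, hdeg⟩ := h V subset_rfl hV
  refine ⟨v, hv, (card_le_card ?_).trans hdeg, (card_le_card ?_).trans hdeg⟩ <;>
  · intro e he
    rw [mem_filter] at he ⊢
    exact ⟨he.1, hE e he.1 |>.1, hE e he.1 |>.2, by tauto⟩

end UndirectedOneDeg

theorem oneDeg_of_undirectedOneDeg {V : Finset α} {E : Finset (α × α)}
    (hE : ∀ e ∈ E, e.1 ∈ V ∧ e.2 ∈ V) (h : UndirectedOneDeg V E) : OneDeg V E := by
  induction hn : #V + #E using Nat.strong_induction_on generalizing V E with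
  | _ n ih =>
  rcases V.eq_empty_or_nonempty with rfl | hV
  · obtain rfl : E = ∅ := eq_empty_of_forall_notMem fun e he => by simpa using (hE e he).1
    exact .empty
  obtain ⟨v, hv, hin, hout⟩ := h.exists_inDeg_le_one_outDeg_le_one hE hV
  rcases hin.lt_or_eq with hin | hin
  · have hin : {e ∈ E | e.2 = v} = ∅ := card_eq_zero.mp (by omega)
    have hsub : {e ∈ E | e.1 ≠ v} ⊆ E := filter_subset _ _
    refine .removeVertex V E v hv hin hout <| ih _ ?_ ?_ (h.mono (erase_subset _ _) hsub) rfl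
    · have := card_erase_lt_of_mem hv
      have := card_le_card hsub
      omega
    · intro e he
      have he₂ : e.2 ≠ v := filter_eq_empty_iff.mp hin (hsub he)
      rw [mem_filter] at he
      exact ⟨mem_erase.mpr ⟨he.2, (hE e he.1).1⟩, mem_erase.mpr ⟨he₂, (hE e he.1).2⟩⟩
  · obtain ⟨⟨u, w⟩, he⟩ := card_eq_one.mp hin
    obtain ⟨huv, rfl⟩ : (u, w) ∈ E ∧ w = v := mem_filter.mp (he ▸ mem_singleton_self _)
    refine .removeInEdge V E u w hv huv hin <|
      ih _ ?_ ?_ (h.mono subset_rfl (erase_subset _ _)) rfl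
    · have := card_erase_lt_of_mem huv
      omega
    · exact fun e he => hE e (mem_of_mem_erase he)

end

namespace SimpleGraph

variable {V : Type*} {G : SimpleGraph V}

/-- Pick `v ∈ S` farthest from a fixed `s ∈ S` among the vertices of `S` reachable from `s`:
every neighbour of `v` in `S` lies on the unique `s`–`v` path, so it is the penultimate vertex. -/
theorem IsAcyclic.exists_mem_subsingleton_neighborSet_inter (hG : G.IsAcyclic) {S : Finset V}
    (hS : S.Nonempty) : ∃ v ∈ S, (G.neighborSet v ∩ S).Subsingleton := by
  classical
  obtain ⟨s, hs⟩ := hS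
  obtain ⟨v, hv, hmax⟩ := (S.filter (G.Reachable s)).exists_max_image (G.dist s)
    ⟨s, Finset.mem_filter.mpr ⟨hs, .rfl⟩⟩
  rw [Finset.mem_filter] at hv
  obtain ⟨p, hp, hp_len⟩ := hv.2.exists_path_of_dist
  suffices h : ∀ w ∈ G.neighborSet v ∩ S, w = p.penultimate from
    ⟨v, hv.1, fun w₁ h₁ w₂ h₂ => (h w₁ h₁).trans (h w₂ h₂).symm⟩
  rintro w ⟨hadj : G.Adj v w, hwS : w ∈ S⟩
  have hsw : G.Reachable s w := hv.2.trans hadj.reachable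
  obtain ⟨q, hq, hq_len⟩ := hsw.exists_path_of_dist
  have hvq : v ∉ q.support := fun hvq => by
    have hdist := hmax w (Finset.mem_filter.mpr ⟨hwS, hsw⟩)
    have := congrArg Walk.length (hG.path_concat hp hq hadj hvq)
    rw [Walk.length_concat] at this
    omega
  exact hG.eq_penultimate_of_adj_end hp hadj
    (hG.mem_support_of_ne_mem_support_of_adj_of_isPath hp hq hadj hvq)

end SimpleGraph

/-- An edge inside `S` at a vertex `v` with a single neighbour `w` in `S` is `(v, w)` or `(w, v)`,
and `hone` excludes having both. -/
theorem undirectedOneDeg_of_isAcyclic {α : Type*} [DecidableEq α] {G : SimpleGraph α}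
    (hG : G.IsAcyclic) {E : Finset (α × α)} (hadj : ∀ e ∈ E, G.Adj e.1 e.2)
    (hone : ∀ u v : α, (u, v) ∈ E → (v, u) ∉ E) (V : Finset α) : UndirectedOneDeg V E := by
  intro S _ hS
  obtain ⟨v, hv, hsub⟩ := hG.exists_mem_subsingleton_neighborSet_inter hS
  have hends : ∀ e ∈ {e ∈ E | e.1 ∈ S ∧ e.2 ∈ S ∧ (e.1 = v ∨ e.2 = v)},
      ∃ w ∈ G.neighborSet v ∩ S, e = (v, w) ∨ e = (w, v) := by
    rintro ⟨a, b⟩ he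
    simp only [mem_filter] at he
    obtain ⟨he, ha, hb, rfl | rfl⟩ := he
    · exact ⟨b, ⟨hadj _ he, hb⟩, .inl rfl⟩
    · exact ⟨a, ⟨(hadj _ he).symm, ha⟩, .inr rfl⟩
  refine ⟨v, hv, card_le_one.mpr fun e he e' he' => ?_⟩
  obtain ⟨w, hw, rfl | rfl⟩ := hends e he <;> obtain ⟨w', hw', rfl | rfl⟩ := hends e' he' <;>
    obtain rfl := hsub hw hw'
  · rfl
  · exact absurd (mem_filter.mp he').1 (hone v w (mem_filter.mp he).1)
  · exact absurd (mem_filter.mp he').1 (hone w v (mem_filter.mp he).1)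
  · rfl

/-- Every directed tree (an orientation of an undirected tree, where each tree edge is
oriented in exactly one direction) is `1`-degenerate. -/
theorem stmt12 {α : Type*} [Fintype α] [DecidableEq α] (G : SimpleGraph α) (hG : G.IsTree)
    (E : Finset (α × α))
    (horient : ∀ u v : α, G.Adj u v ↔ ((u, v) ∈ E ∨ (v, u) ∈ E))
    (hone : ∀ u v : α, (u, v) ∈ E → (v, u) ∉ E) :
    OneDeg (Finset.univ : Finset α) E :=
  oneDeg_of_undirectedOneDeg (fun _ _ => ⟨mem_univ _, mem_univ _⟩) <|
    undirectedOneDeg_of_isAcyclic hG.isAcyclic (fun e he => (horient e.1 e.2).mpr (.inl he)) hone _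
end

section
/- Exploration-mixing variance bound: let u, X ∈ Δ_n, γ ∈ (0,1), and X̃ = (1−γ)X + γu. Suppose x* : V → [0,1] is a feasible fractional weak dominating solution with total mass δ* = Σ_i x*_i and u(i) = x*_i/δ*. Then for every vertex j ∈ U (no self-loop), X(j) / (Σ_{i ∈ N_in(j)} X̃(i)) ≤ X(j)·δ*/γ, and summing over j ∈ U gives Σ_{j∈U} X(j)/(Σ_{i∈N_in(j)} X̃(i)) ≤ δ*/γ. -/
/-!
Every vertex `j` without a self-loop is covered by the fractional solution, so the exploration
part alone gives its in-neighbourhood mass `γ * ∑ u ≥ γ / δ*` under `X̃`. Hence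
`X j / ∑ X̃ ≤ X j * δ* / γ`, and summing over `j` uses only `∑ X = 1`.
-/

open Finset

section Mixture

variable {ι : Type*} {s : Finset ι} {γ δ : ℝ} {X u : ι → ℝ}

theorem mul_sum_le_sum_mix (hγ1 : γ ≤ 1) (hX : ∀ i ∈ s, 0 ≤ X i) :
    γ * ∑ i ∈ s, u i ≤ ∑ i ∈ s, ((1 - γ) * X i + γ * u i) := by
  rw [mul_sum]
  exact sum_le_sum fun i hi => le_add_of_nonneg_left (mul_nonneg (sub_nonneg.2 hγ1) (hX i hi))

theorem div_le_sum_mix_of_one_le_sum (hγ0 : 0 ≤ γ) (hγ1 : γ ≤ 1) (hδ : 0 < δ)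
    (hX : ∀ i ∈ s, 0 ≤ X i) (hcover : 1 ≤ ∑ i ∈ s, u i) :
    γ / δ ≤ ∑ i ∈ s, ((1 - γ) * X i + γ * (u i / δ)) :=
  calc γ / δ ≤ γ * ∑ i ∈ s, u i / δ := by
        rw [← sum_div, ← mul_div_assoc]
        gcongr
        exact le_mul_of_one_le_right hγ0 hcover
    _ ≤ _ := mul_sum_le_sum_mix hγ1 hX

theorem sum_le_of_le_mul [Fintype ι] {f : ι → ℝ} {c : ℝ} (hc : 0 ≤ c) (hX0 : ∀ i, 0 ≤ X i)
    (hX1 : ∑ i, X i = 1) (hf : ∀ i ∈ s, f i ≤ X i * c) : ∑ i ∈ s, f i ≤ c :=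
  calc ∑ i ∈ s, f i ≤ ∑ i ∈ s, X i * c := sum_le_sum hf
    _ ≤ ∑ i, X i * c :=
        sum_le_sum_of_subset_of_nonneg (subset_univ s) fun i _ _ => mul_nonneg (hX0 i) hc
    _ = c := by rw [← sum_mul, hX1, one_mul]

end Mixture

theorem div_le_mul_div_of_div_le {a b c s : ℝ} (ha : 0 ≤ a) (hb : 0 < b) (hc : 0 < c)
    (hs : b / c ≤ s) : a / s ≤ a * c / b :=
  calc a / s ≤ a / (b / c) := div_le_div_of_nonneg_left ha (by positivity) hs
    _ = a * c / b := div_div_eq_mul_div a b c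

theorem stmt19_general {V : Type*} [Fintype V] (E : V → V → Prop) [DecidableRel E]
    (xs : V → ℝ)
    (hfeas : ∀ j, ¬ E j j → 1 ≤ ∑ i ∈ Finset.univ.filter (fun i => E i j), xs i)
    (δstar : ℝ) (hδpos : 0 < δstar)
    (u X : V → ℝ) (hu : ∀ i, u i = xs i / δstar)
    (hX0 : ∀ i, 0 ≤ X i) (hX1 : ∑ i, X i = 1)
    (γ : ℝ) (hγ : γ ∈ Set.Ioo (0 : ℝ) 1)
    (Xt : V → ℝ) (hXt : ∀ i, Xt i = (1 - γ) * X i + γ * u i) :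
    (∀ j, ¬ E j j →
      X j / (∑ i ∈ Finset.univ.filter (fun i => E i j), Xt i) ≤ X j * δstar / γ) ∧
    (∑ j ∈ Finset.univ.filter (fun j => ¬ E j j),
        X j / (∑ i ∈ Finset.univ.filter (fun i => E i j), Xt i)) ≤ δstar / γ := by
  obtain ⟨hγ0, hγ1⟩ := hγ
  obtain rfl : u = fun i => xs i / δstar := funext hu
  obtain rfl : Xt = fun i => (1 - γ) * X i + γ * (xs i / δstar) := funext hXt
  have hvertex : ∀ j, ¬ E j j →
      X j / (∑ i ∈ univ.filter (fun i => E i j), ((1 - γ) * X i + γ * (xs i / δstar))) ≤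
        X j * δstar / γ := fun j hj =>
    div_le_mul_div_of_div_le (hX0 j) hγ0 hδpos
      (div_le_sum_mix_of_one_le_sum hγ0.le hγ1.le hδpos (fun i _ => hX0 i) (hfeas j hj))
  refine ⟨hvertex, sum_le_of_le_mul (by positivity) hX0 hX1 fun j hj => ?_⟩
  rw [← mul_div_assoc]
  exact hvertex j (mem_filter.1 hj).2

/-- Exploration-mixing variance bound. Let `x*` be a feasible fractional weak dominating
solution with total mass `δ* > 0`, `u = x*/δ*` the exploration distribution, `X` a
distribution on arms, `γ ∈ (0,1)` and `X̃ = (1-γ)X + γu`. Then for every vertex `j` without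
a self-loop, `X j / (∑_{i ∈ N_in(j)} X̃ i) ≤ X j · δ*/γ`, and summing over all such `j`,
`∑_{j ∈ U} X j / (∑_{i ∈ N_in(j)} X̃ i) ≤ δ*/γ`. -/
theorem stmt19 {V : Type*} [Fintype V] (E : V → V → Prop) [DecidableRel E]
    (xs : V → ℝ) (hxs : ∀ i, 0 ≤ xs i ∧ xs i ≤ 1)
    (hfeas : ∀ j, ¬ E j j → 1 ≤ ∑ i ∈ Finset.univ.filter (fun i => E i j), xs i)
    (δstar : ℝ) (hδ : δstar = ∑ i, xs i) (hδpos : 0 < δstar)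
    (u X : V → ℝ) (hu : ∀ i, u i = xs i / δstar)
    (hX0 : ∀ i, 0 ≤ X i) (hX1 : ∑ i, X i = 1)
    (γ : ℝ) (hγ : γ ∈ Set.Ioo (0 : ℝ) 1)
    (Xt : V → ℝ) (hXt : ∀ i, Xt i = (1 - γ) * X i + γ * u i) :
    (∀ j, ¬ E j j →
      X j / (∑ i ∈ Finset.univ.filter (fun i => E i j), Xt i) ≤ X j * δstar / γ) ∧
    (∑ j ∈ Finset.univ.filter (fun j => ¬ E j j),
        X j / (∑ i ∈ Finset.univ.filter (fun i => E i j), Xt i)) ≤ δstar / γ :=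
  stmt19_general E xs hfeas δstar hδpos u X hu hX0 hX1 γ hγ Xt hXt
end
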